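/- arXiv:1103.3991 — 2 statements merged into one kernel-verified Lean document; each statement's English description precedes it below -/
import Mathlib

section
/- Let G be a finite group, M a semi-Mackey functor on G, and 𝒮 ⊆ M a saturated semi-Mackey subfunctor (𝒮(X) is a saturated submonoid of M(X) for every X). Then for every finite G-set X, 𝒮(X) equals the saturation of pt_X^*(𝒮(G/G)) in M(X), where pt_X : X → G/G is the unique map to the one-point G-set. Consequently 𝒮 is determined by 𝒮(G/G). -/
/-- A finite `G`-set: a finite type equipped with a `G`-action. -/
structure FinGSet (G : Type) [Group G] where
  carrier : Type
  [fin : Fintype carrier]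
  [act : MulAction G carrier]

attribute [instance] FinGSet.fin FinGSet.act

/-- A map of `G`-sets is equivariant if it commutes with the action. -/
def IsEquivariant {G : Type} [Group G] {X Y : FinGSet G}
    (f : X.carrier → Y.carrier) : Prop :=
  ∀ (g : G) (x : X.carrier), f (g • x) = g • f x

/-- The disjoint union of two finite `G`-sets. -/
def FinGSet.sum {G : Type} [Group G] (X Y : FinGSet G) : FinGSet G where
  carrier := X.carrier ⊕ Y.carrier

/-- A semi-Mackey functor on `G` with underlying family of commutative monoids `N`:
a contravariant functor `res` (restriction) and a covariant functor `tr`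
(transfer) on finite `G`-sets, additive on disjoint unions and satisfying the
Mackey (base change) condition on all pullback diagrams. -/
structure SemiMackey (G : Type) [Group G] (N : FinGSet G → Type)
    [∀ X, CommMonoid (N X)] where
  res : ∀ {X Y : FinGSet G} (f : X.carrier → Y.carrier), IsEquivariant f → (N Y →* N X)
  tr : ∀ {X Y : FinGSet G} (f : X.carrier → Y.carrier), IsEquivariant f → (N X →* N Y)
  res_id : ∀ (X : FinGSet G) (h : IsEquivariant (id : X.carrier → X.carrier)) (m : N X),
    res id h m = m
  tr_id : ∀ (X : FinGSet G) (h : IsEquivariant (id : X.carrier → X.carrier)) (m : N X),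
    tr id h m = m
  res_comp : ∀ {X Y Z : FinGSet G} (f : X.carrier → Y.carrier) (hf : IsEquivariant f)
    (g : Y.carrier → Z.carrier) (hg : IsEquivariant g)
    (hgf : IsEquivariant (g ∘ f)) (m : N Z),
    res (g ∘ f) hgf m = res f hf (res g hg m)
  tr_comp : ∀ {X Y Z : FinGSet G} (f : X.carrier → Y.carrier) (hf : IsEquivariant f)
    (g : Y.carrier → Z.carrier) (hg : IsEquivariant g)
    (hgf : IsEquivariant (g ∘ f)) (m : N X),
    tr (g ∘ f) hgf m = tr g hg (tr f hf m)
  additive : ∀ (X Y : FinGSet G)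
    (h₁ : IsEquivariant (X := X) (Y := FinGSet.sum X Y) Sum.inl)
    (h₂ : IsEquivariant (X := Y) (Y := FinGSet.sum X Y) Sum.inr),
    Function.Bijective (fun m : N (FinGSet.sum X Y) => (res Sum.inl h₁ m, res Sum.inr h₂ m))
  mackey : ∀ {P X W Y : FinGSet G}
    (f : X.carrier → Y.carrier) (hf : IsEquivariant f)
    (g : W.carrier → Y.carrier) (hg : IsEquivariant g)
    (pX : P.carrier → X.carrier) (hpX : IsEquivariant pX)
    (pW : P.carrier → W.carrier) (hpW : IsEquivariant pW)
    (hcomm : ∀ p, f (pX p) = g (pW p)),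
    Function.Bijective
      (fun p : P.carrier =>
        (⟨(pX p, pW p), hcomm p⟩ : {q : X.carrier × W.carrier // f q.1 = g q.2})) →
    ∀ m : N W, res f hf (tr g hg m) = tr pX hpX (res pW hpW m)

/-- The saturation of a subset of a commutative monoid. -/
def satSet {M : Type*} [CommMonoid M] (S : Set M) : Set M :=
  {x | ∃ a : M, ∃ s ∈ S, a * x = s}

/-- The one-point `G`-set `G/G`. -/
def ptObj (G : Type) [Group G] : FinGSet G where
  carrier := PUnit
  act :=
    { smul := fun _ _ => PUnit.unit
      one_smul := fun _ => rfl
      mul_smul := fun _ _ _ => rfl }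

/-- The constant map `pt_X : X → G/G`. -/
def ptMap {G : Type} [Group G] (X : FinGSet G) : X.carrier → (ptObj G).carrier :=
  fun _ => PUnit.unit

theorem ptMap_equivariant {G : Type} [Group G] (X : FinGSet G) :
    IsEquivariant (ptMap X) := fun _ _ => rfl

/-! A transfer followed by a restriction along `pt_X` is computed, by the Mackey formula for
the square `X ← X × X → X`, as transfer along `fst` of restriction along `snd`. Splitting
`X × X` into the diagonal and its complement writes `pt_X^* pt_{X*} x = x * b`, so every `x`
in `𝒮(X)` divides an element of `pt_X^* 𝒮(G/G)`; saturation gives the converse. -/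

theorem satSet_mono {M : Type*} [CommMonoid M] {S T : Set M} (h : S ⊆ T) :
    satSet S ⊆ satSet T :=
  fun _ ⟨a, s, hs, hx⟩ => ⟨a, s, h hs, hx⟩

namespace IsEquivariant

variable {G : Type} [Group G]

theorem id (X : FinGSet G) : IsEquivariant (id : X.carrier → X.carrier) := fun _ _ => rfl

theorem comp {X Y Z : FinGSet G} {g : Y.carrier → Z.carrier} {f : X.carrier → Y.carrier}
    (hg : IsEquivariant g) (hf : IsEquivariant f) : IsEquivariant (g ∘ f) :=
  fun a x => by rw [Function.comp_apply, hf, hg]; rfl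

theorem inl (X Y : FinGSet G) :
    IsEquivariant (X := X) (Y := X.sum Y) Sum.inl := fun _ _ => rfl

theorem inr (X Y : FinGSet G) :
    IsEquivariant (X := Y) (Y := X.sum Y) Sum.inr := fun _ _ => rfl

theorem sumElim {X Y Z : FinGSet G} {f : X.carrier → Z.carrier} {g : Y.carrier → Z.carrier}
    (hf : IsEquivariant f) (hg : IsEquivariant g) :
    IsEquivariant (X := X.sum Y) (Sum.elim f g) := by
  rintro a (x | y)
  exacts [hf a x, hg a y]

theorem surjInv {X Y : FinGSet G} {f : X.carrier → Y.carrier} (hf : IsEquivariant f)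
    (hbij : Function.Bijective f) : IsEquivariant (Function.surjInv hbij.2) := fun a y =>
  hbij.1 <| by rw [hf, Function.surjInv_eq hbij.2, Function.surjInv_eq hbij.2]

end IsEquivariant

namespace FinGSet

variable (G : Type) [Group G]

def empty : FinGSet G where
  carrier := Empty
  act :=
    { smul := fun _ x => x
      one_smul := fun _ => rfl
      mul_smul := fun _ _ _ => rfl }

instance : IsEmpty (empty G).carrier := inferInstanceAs (IsEmpty Empty)

variable {G}

def prod (X Y : FinGSet G) : FinGSet G where
  carrier := X.carrier × Y.carrier

noncomputable def offDiag (X : FinGSet G) : FinGSet G where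
  carrier := {p : X.carrier × X.carrier // p.1 ≠ p.2}
  fin := Fintype.ofFinite _
  act :=
    { smul := fun g p => ⟨g • p.1, fun h => p.2 (MulAction.injective g h)⟩
      one_smul := fun p => Subtype.ext (one_smul G p.1)
      mul_smul := fun g h p => Subtype.ext (mul_smul g h p.1) }

theorem bijective_sumElim_diag_val (X : FinGSet G) :
    Function.Bijective (Sum.elim (fun x => (x, x)) Subtype.val :
      X.carrier ⊕ (offDiag X).carrier → X.carrier × X.carrier) := by
  refine ⟨?_, fun q => ?_⟩
  · rintro (x | ⟨p, hp⟩) (y | ⟨q, hq⟩) h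
    · exact congrArg Sum.inl (congrArg Prod.fst h)
    · cases h; exact absurd rfl hq
    · cases h; exact absurd rfl hp
    · exact congrArg Sum.inr (Subtype.ext h)
  · by_cases hq : q.1 = q.2
    · exact ⟨.inl q.1, Prod.ext rfl hq⟩
    · exact ⟨.inr ⟨q, hq⟩, rfl⟩

end FinGSet

namespace SemiMackey

variable {G : Type} [Group G] {N : FinGSet G → Type} [∀ X, CommMonoid (N X)]
  (M : SemiMackey G N)

theorem res_congr {X Y : FinGSet G} {f f' : X.carrier → Y.carrier} (h : f = f')
    (hf : IsEquivariant f) (hf' : IsEquivariant f') (m : N Y) :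
    M.res f hf m = M.res f' hf' m := by
  subst h; rfl

theorem eq_one_of_isEmpty (M : SemiMackey G N) {X : FinGSet G} [IsEmpty X.carrier] (n : N X) :
    n = 1 := by
  obtain ⟨m, hm⟩ := (M.additive X X (.inl X X) (.inr X X)).2 (n, 1)
  rw [Prod.mk.injEq] at hm
  rw [← hm.1, ← hm.2]
  -- `Sum.inl` and `Sum.inr` coincide on an empty domain
  exact M.res_congr (funext isEmptyElim) _ _ m

theorem res_tr_of_injective {X Y : FinGSet G} {f : X.carrier → Y.carrier}
    (hf : IsEquivariant f) (hinj : Function.Injective f) (m : N X) :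
    M.res f hf (M.tr f hf m) = m := by
  have hpullback : Function.Bijective fun x : X.carrier =>
      (⟨(x, x), rfl⟩ : {q : X.carrier × X.carrier // f q.1 = f q.2}) :=
    ⟨fun _ _ h => congrArg (·.1.1) h,
      fun ⟨(a, b), hab⟩ => ⟨a, Subtype.ext (Prod.ext rfl (hinj hab))⟩⟩
  rw [M.mackey f hf f hf _ (.id X) _ (.id X) (fun _ => rfl) hpullback, M.res_id, M.tr_id]

theorem res_tr_of_disjoint {X W Y : FinGSet G} {f : X.carrier → Y.carrier}
    (hf : IsEquivariant f) {g : W.carrier → Y.carrier} (hg : IsEquivariant g)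
    (hdisj : ∀ x w, f x ≠ g w) (m : N W) :
    M.res f hf (M.tr g hg m) = 1 := by
  have hpullback : Function.Bijective fun p : (FinGSet.empty G).carrier =>
      (⟨(isEmptyElim p, isEmptyElim p), isEmptyElim p⟩ :
        {q : X.carrier × W.carrier // f q.1 = g q.2}) :=
    ⟨fun p => isEmptyElim p, fun ⟨(x, w), h⟩ => absurd h (hdisj x w)⟩
  rw [M.mackey f hf g hg _ (fun _ p => isEmptyElim p) _ (fun _ p => isEmptyElim p)
    (fun p => isEmptyElim p) hpullback]
  exact (congrArg _ (M.eq_one_of_isEmpty _)).trans (map_one _)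

theorem eq_tr_inl_mul_tr_inr {X Y : FinGSet G} (m : N (X.sum Y)) :
    m = M.tr Sum.inl (.inl X Y) (M.res Sum.inl (.inl X Y) m)
      * M.tr Sum.inr (.inr X Y) (M.res Sum.inr (.inr X Y) m) := by
  refine (M.additive X Y (.inl X Y) (.inr X Y)).1 ?_
  simp only [map_mul, Prod.mk.injEq]
  rw [M.res_tr_of_injective (.inl X Y) Sum.inl_injective,
    M.res_tr_of_injective (.inr X Y) Sum.inr_injective,
    M.res_tr_of_disjoint (.inl X Y) (.inr X Y) (fun _ _ => Sum.inl_ne_inr),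
    M.res_tr_of_disjoint (.inr X Y) (.inl X Y) (fun _ _ => Sum.inr_ne_inl), mul_one, one_mul]
  exact ⟨rfl, rfl⟩

theorem res_injective_of_bijective {X Y : FinGSet G} {f : X.carrier → Y.carrier}
    (hf : IsEquivariant f) (hbij : Function.Bijective f) :
    Function.Injective (M.res f hf) := by
  refine Function.LeftInverse.injective (g := M.res _ (hf.surjInv hbij)) fun m => ?_
  rw [← M.res_comp _ _ _ _ (hf.comp (hf.surjInv hbij)),
    M.res_congr (Function.rightInverse_surjInv hbij.2).comp_eq_id _ (.id Y), M.res_id]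

theorem tr_res_of_bijective {X Y : FinGSet G} {f : X.carrier → Y.carrier}
    (hf : IsEquivariant f) (hbij : Function.Bijective f) (m : N Y) :
    M.tr f hf (M.res f hf m) = m :=
  M.res_injective_of_bijective hf hbij (M.res_tr_of_injective hf hbij.1 _)

theorem eq_tr_mul_tr_of_bijective_sumElim {X₁ X₂ Y : FinGSet G}
    {i₁ : X₁.carrier → Y.carrier} (hi₁ : IsEquivariant i₁)
    {i₂ : X₂.carrier → Y.carrier} (hi₂ : IsEquivariant i₂)
    (hbij : Function.Bijective (Sum.elim i₁ i₂)) (m : N Y) :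
    m = M.tr i₁ hi₁ (M.res i₁ hi₁ m) * M.tr i₂ hi₂ (M.res i₂ hi₂ m) := by
  have hi := IsEquivariant.sumElim hi₁ hi₂
  conv_lhs => rw [← M.tr_res_of_bijective hi hbij m, M.eq_tr_inl_mul_tr_inr (M.res _ hi m)]
  rw [map_mul, ← M.tr_comp _ _ _ _ (hi.comp (.inl X₁ X₂)),
    ← M.tr_comp _ _ _ _ (hi.comp (.inr X₁ X₂)), ← M.res_comp _ _ _ _ (hi.comp (.inl X₁ X₂)), ← M.res_comp _ _ _ _ (hi.comp (.inr X₁ X₂))]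
  rfl

theorem exists_res_ptMap_tr_ptMap_eq_mul {X : FinGSet G} (x : N X) :
    ∃ b, M.res (ptMap X) (ptMap_equivariant X) (M.tr (ptMap X) (ptMap_equivariant X) x)
      = x * b := by
  have hfst : IsEquivariant (X := X.prod X) Prod.fst := fun _ _ => rfl
  have hsnd : IsEquivariant (X := X.prod X) Prod.snd := fun _ _ => rfl
  have hdiag : IsEquivariant (Y := X.prod X) fun x => (x, x) := fun _ _ => rfl
  have hval : IsEquivariant (X := X.offDiag) (Y := X.prod X) Subtype.val := fun _ _ => rfl
  have hpullback : Function.Bijective fun p : (X.prod X).carrier =>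
      (⟨p, rfl⟩ : {q : X.carrier × X.carrier // ptMap X q.1 = ptMap X q.2}) :=
    ⟨fun _ _ h => congrArg Subtype.val h, fun q => ⟨q.1, rfl⟩⟩
  rw [M.mackey _ _ _ _ _ hfst _ hsnd (fun _ => rfl) hpullback,
    M.eq_tr_mul_tr_of_bijective_sumElim hdiag hval (FinGSet.bijective_sumElim_diag_val X)
      (M.res _ hsnd x),
    map_mul, ← M.tr_comp _ _ _ _ (hfst.comp hdiag), ← M.res_comp _ _ _ _ (hsnd.comp hdiag)]
  exact ⟨_, congrArg (· * _) ((M.tr_id X (.id X) _).trans (M.res_id X (.id X) x))⟩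

theorem eq_satSet_image_res_ptMap {X : FinGSet G} {T : Set (N X)} {P : Set (N (ptObj G))}
    (hres : Set.MapsTo (M.res (ptMap X) (ptMap_equivariant X)) P T)
    (htr : Set.MapsTo (M.tr (ptMap X) (ptMap_equivariant X)) T P) (hsat : satSet T = T) :
    T = satSet (M.res (ptMap X) (ptMap_equivariant X) '' P) := by
  refine subset_antisymm (fun x hx => ?_) (hsat ▸ satSet_mono hres.image_subset)
  obtain ⟨b, hb⟩ := M.exists_res_ptMap_tr_ptMap_eq_mul x
  exact ⟨b, _, ⟨_, htr hx, rfl⟩, by rw [hb, mul_comm]⟩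

end SemiMackey

/-- A saturated semi-Mackey subfunctor `𝒮 ⊆ M` satisfies
`𝒮(X) = (pt_X^*(𝒮(G/G)))~` for every finite `G`-set `X`; consequently a
saturated subfunctor is determined by its value at `G/G`. -/
theorem semiMackey_saturated_subfunctor_determined {G : Type} [Group G]
    {N : FinGSet G → Type} [∀ X, CommMonoid (N X)] (M : SemiMackey G N)
    (S : ∀ X : FinGSet G, Submonoid (N X))
    (hres : ∀ {X Y : FinGSet G} (f : X.carrier → Y.carrier) (hf : IsEquivariant f),
      ∀ s ∈ S Y, M.res f hf s ∈ S X)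
    (htr : ∀ {X Y : FinGSet G} (f : X.carrier → Y.carrier) (hf : IsEquivariant f),
      ∀ s ∈ S X, M.tr f hf s ∈ S Y)
    (hsat : ∀ X : FinGSet G, satSet (S X : Set (N X)) = (S X : Set (N X))) :
    (∀ X : FinGSet G,
      (S X : Set (N X))
        = satSet ((M.res (ptMap X) (ptMap_equivariant X)) '' (S (ptObj G) : Set _))) ∧
    (∀ S' : ∀ X : FinGSet G, Submonoid (N X),
      (∀ {X Y : FinGSet G} (f : X.carrier → Y.carrier) (hf : IsEquivariant f),
        ∀ s ∈ S' Y, M.res f hf s ∈ S' X) →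
      (∀ {X Y : FinGSet G} (f : X.carrier → Y.carrier) (hf : IsEquivariant f),
        ∀ s ∈ S' X, M.tr f hf s ∈ S' Y) →
      (∀ X : FinGSet G, satSet (S' X : Set (N X)) = (S' X : Set (N X))) →
      S' (ptObj G) = S (ptObj G) → ∀ X : FinGSet G, S' X = S X) := by
  refine ⟨fun X => M.eq_satSet_image_res_ptMap (hres _ _) (htr _ _) (hsat X),
    fun S' hres' htr' hsat' hpt X => ?_⟩
  rw [← SetLike.coe_set_eq, M.eq_satSet_image_res_ptMap (hres' _ _) (htr' _ _) (hsat' X),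
    M.eq_satSet_image_res_ptMap (hres _ _) (htr _ _) (hsat X), hpt]
end

section
/- Let G be a finite group, M and M' semi-Mackey functors on G, and 𝒮 ⊆ M a semi-Mackey subfunctor. Then precomposition with the localization morphism ℓ_𝒮 : M → 𝒮⁻¹M gives a bijection between morphisms of semi-Mackey functors 𝒮⁻¹M → M' and those morphisms ϑ : M → M' satisfying ϑ_X(𝒮(X)) ⊆ (M'(X))^× for all finite G-sets X. -/
/-- A morphism of semi-Mackey functors: a family of monoid homomorphisms
commuting with restrictions and transfers. -/
structure SMHom {G : Type} [Group G] {N N' : FinGSet G → Type}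
    [∀ X, CommMonoid (N X)] [∀ X, CommMonoid (N' X)]
    (M : SemiMackey G N) (M' : SemiMackey G N') where
  app : ∀ X : FinGSet G, N X →* N' X
  res_comm : ∀ {X Y : FinGSet G} (f : X.carrier → Y.carrier) (hf : IsEquivariant f)
    (m : N Y), app X (M.res f hf m) = M'.res f hf (app Y m)
  tr_comm : ∀ {X Y : FinGSet G} (f : X.carrier → Y.carrier) (hf : IsEquivariant f)
    (m : N X), app Y (M.tr f hf m) = M'.tr f hf (app X m)

/-!
Objectwise, `ϑ_X` inverts `𝒮(X)` and so factors uniquely through the monoid localization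
`M(X) → 𝒮⁻¹M(X)`. These factorizations commute with restrictions and transfers because a
localization map is an epimorphism and the corresponding squares commute after precomposing with
`ℓ_𝒮`, where they are the naturality of `ℓ_𝒮` and of `ϑ`.
-/

namespace Submonoid.LocalizationMap

variable {M M' P P' Q Q' : Type*} [CommMonoid M] [CommMonoid M'] [CommMonoid P]
  [CommMonoid P'] [CommMonoid Q] [CommMonoid Q'] {S : Submonoid M} {T : Submonoid M'}

theorem lift_comm_of_comm (f : S.LocalizationMap P) (f' : T.LocalizationMap P')
    {g : M →* Q} {g' : M' →* Q'} (hg : ∀ y : S, IsUnit (g y)) (hg' : ∀ y : T, IsUnit (g' y))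
    (ρ : P →* P') (r : M →* M') (σ : Q →* Q')
    (hρ : ∀ m, ρ (f m) = f' (r m)) (hσ : ∀ m, g' (r m) = σ (g m)) (x : P) :
    f'.lift hg' (ρ x) = σ (f.lift hg x) := by
  have hcomp :
      ((f'.lift hg').comp ρ).comp f.toMonoidHom = (σ.comp (f.lift hg)).comp f.toMonoidHom :=
    MonoidHom.ext fun m => by simp only [MonoidHom.comp_apply, toMonoidHom_apply, hρ, lift_eq, hσ]
  exact DFunLike.congr_fun (f.epic_of_localizationMap hcomp) x

end Submonoid.LocalizationMap

namespace SMHom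

variable {G : Type} [Group G] {N N' : FinGSet G → Type} [∀ X, CommMonoid (N X)]
  [∀ X, CommMonoid (N' X)] {M : SemiMackey G N} {M' : SemiMackey G N'}

theorem ext {θ θ' : SMHom M M'} (h : ∀ X, θ.app X = θ'.app X) : θ = θ' := by
  cases θ
  cases θ'
  congr
  exact funext h

variable {S : ∀ X : FinGSet G, Submonoid (N X)} {L : SemiMackey G (fun X => Localization (S X))}

noncomputable def liftLocalization
    (hLres : ∀ (X Y : FinGSet G) (f : X.carrier → Y.carrier) (hf : IsEquivariant f)
      (m : N Y), L.res f hf (Localization.monoidOf (S Y) m)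
        = Localization.monoidOf (S X) (M.res f hf m))
    (hLtr : ∀ (X Y : FinGSet G) (f : X.carrier → Y.carrier) (hf : IsEquivariant f)
      (m : N X), L.tr f hf (Localization.monoidOf (S X) m)
        = Localization.monoidOf (S Y) (M.tr f hf m))
    (ϑ : SMHom M M') (hϑ : ∀ X : FinGSet G, ∀ s : S X, IsUnit (ϑ.app X s)) : SMHom L M' where
  app X := (Localization.monoidOf (S X)).lift (hϑ X)
  res_comm {X Y} f hf m :=
    Submonoid.LocalizationMap.lift_comm_of_comm _ _ _ _ (L.res f hf) (M.res f hf) (M'.res f hf)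
      (hLres X Y f hf) (ϑ.res_comm f hf) m
  tr_comm {X Y} f hf m :=
    Submonoid.LocalizationMap.lift_comm_of_comm _ _ _ _ (L.tr f hf) (M.tr f hf) (M'.tr f hf)
      (hLtr X Y f hf) (ϑ.tr_comm f hf) m

end SMHom

theorem semiMackey_localization_universal_general {G : Type} [Group G]
    {N N' : FinGSet G → Type} [∀ X, CommMonoid (N X)] [∀ X, CommMonoid (N' X)]
    (M : SemiMackey G N) (M' : SemiMackey G N')
    (S : ∀ X : FinGSet G, Submonoid (N X))
    (L : SemiMackey G (fun X => Localization (S X)))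
    (hLres : ∀ (X Y : FinGSet G) (f : X.carrier → Y.carrier) (hf : IsEquivariant f)
      (m : N Y), L.res f hf ((Localization.monoidOf (S Y)).toMonoidHom m)
        = (Localization.monoidOf (S X)).toMonoidHom (M.res f hf m))
    (hLtr : ∀ (X Y : FinGSet G) (f : X.carrier → Y.carrier) (hf : IsEquivariant f)
      (m : N X), L.tr f hf ((Localization.monoidOf (S X)).toMonoidHom m)
        = (Localization.monoidOf (S Y)).toMonoidHom (M.tr f hf m)) :
    (∀ θ : SMHom L M', ∀ X : FinGSet G, ∀ s ∈ S X,
      IsUnit (θ.app X ((Localization.monoidOf (S X)).toMonoidHom s))) ∧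
    (∀ ϑ : SMHom M M', (∀ X : FinGSet G, ∀ s ∈ S X, IsUnit (ϑ.app X s)) →
      ∃! θ : SMHom L M', ∀ (X : FinGSet G) (m : N X),
        θ.app X ((Localization.monoidOf (S X)).toMonoidHom m) = ϑ.app X m) := by
  refine ⟨fun θ X s hs => ((Localization.monoidOf (S X)).map_units ⟨s, hs⟩).map (θ.app X),
    fun ϑ hϑ => ?_⟩
  have hϑ' : ∀ X, ∀ s : S X, IsUnit (ϑ.app X s) := fun X s => hϑ X s s.2
  refine ⟨SMHom.liftLocalization hLres hLtr ϑ hϑ',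
    fun X => (Localization.monoidOf (S X)).lift_eq (hϑ' X), fun θ hθ => ?_⟩
  exact SMHom.ext fun X => ((Localization.monoidOf (S X)).lift_unique (hϑ' X) (hθ X)).symm

/-- Universal property of the localization `𝒮⁻¹M` of a semi-Mackey functor `M`
at a semi-Mackey subfunctor `𝒮`: precomposition with `ℓ_𝒮` is a bijection
between morphisms `𝒮⁻¹M → M'` and morphisms `ϑ : M → M'` with
`ϑ(𝒮) ⊆ M'^×`. -/
theorem semiMackey_localization_universal {G : Type} [Group G]
    {N N' : FinGSet G → Type} [∀ X, CommMonoid (N X)] [∀ X, CommMonoid (N' X)]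
    (M : SemiMackey G N) (M' : SemiMackey G N')
    (S : ∀ X : FinGSet G, Submonoid (N X))
    (hres : ∀ {X Y : FinGSet G} (f : X.carrier → Y.carrier) (hf : IsEquivariant f),
      ∀ s ∈ S Y, M.res f hf s ∈ S X)
    (htr : ∀ {X Y : FinGSet G} (f : X.carrier → Y.carrier) (hf : IsEquivariant f),
      ∀ s ∈ S X, M.tr f hf s ∈ S Y)
    (L : SemiMackey G (fun X => Localization (S X)))
    (hLres : ∀ (X Y : FinGSet G) (f : X.carrier → Y.carrier) (hf : IsEquivariant f)
      (m : N Y), L.res f hf ((Localization.monoidOf (S Y)).toMonoidHom m)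
        = (Localization.monoidOf (S X)).toMonoidHom (M.res f hf m))
    (hLtr : ∀ (X Y : FinGSet G) (f : X.carrier → Y.carrier) (hf : IsEquivariant f)
      (m : N X), L.tr f hf ((Localization.monoidOf (S X)).toMonoidHom m)
        = (Localization.monoidOf (S Y)).toMonoidHom (M.tr f hf m)) :
    (∀ θ : SMHom L M', ∀ X : FinGSet G, ∀ s ∈ S X,
      IsUnit (θ.app X ((Localization.monoidOf (S X)).toMonoidHom s))) ∧
    (∀ ϑ : SMHom M M', (∀ X : FinGSet G, ∀ s ∈ S X, IsUnit (ϑ.app X s)) →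
      ∃! θ : SMHom L M', ∀ (X : FinGSet G) (m : N X),
        θ.app X ((Localization.monoidOf (S X)).toMonoidHom m) = ϑ.app X m) :=
  semiMackey_localization_universal_general M M' S L hLres hLtr
end
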